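/- Let u : U → A be a universal central extension of groups. Then every central extension g : V → U of the group U splits, i.e. admits a homomorphic section. -/

import Mathlib

/-!
A universal central extension `u : U → A` has a perfect domain: the two lifts `(id, 1)` and
`(id, Abelianization.of)` of `u` through the central extension `U × Uᵃᵇ → A` must agree.
For a central extension `g : V → U` of a perfect group, the three subgroups lemma shows that
every element of `V` central modulo `ker g` is central, so `u ∘ g` is again a central
extension of `A`. Its lift `s : U → V` satisfies `u ∘ (g ∘ s) = u = u ∘ id`, and uniqueness
of lifts through `u` itself gives `g ∘ s = id`.
-/

universe u

open Subgroup

def IsUniversalCentralExtension {A U : Type u} [Group A] [Group U] (u : U →* A) : Prop :=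
  Function.Surjective u ∧ u.ker ≤ center U ∧
    ∀ (B : Type u) [Group B] (f : B →* A), Function.Surjective f → f.ker ≤ center B →
      ∃! h : U →* B, f.comp h = u

namespace IsUniversalCentralExtension

variable {A U : Type u} [Group A] [Group U] {u : U →* A}

theorem hom_ext (hu : IsUniversalCentralExtension u) {B : Type u} [Group B] {f : B →* A}
    (hf : Function.Surjective f) (hfc : f.ker ≤ center B) {h₁ h₂ : U →* B}
    (h₁u : f.comp h₁ = u) (h₂u : f.comp h₂ = u) : h₁ = h₂ :=
  (hu.2.2 B f hf hfc).unique h₁u h₂u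

theorem isPerfect (hu : IsUniversalCentralExtension u) : Group.IsPerfect U := by
  let f := u.comp (MonoidHom.fst U (Abelianization U))
  have hf : Function.Surjective f := hu.1.comp fun x => ⟨(x, 1), rfl⟩
  have hfc : f.ker ≤ center _ := by
    intro p hp
    refine mem_center_iff.mpr fun q => Prod.ext ?_ (mul_comm q.2 p.2)
    exact mem_center_iff.mp (hu.2.1 hp) q.1
  have hlifts := hu.hom_ext hf hfc
    (h₁ := (MonoidHom.id U).prod 1) (h₂ := (MonoidHom.id U).prod Abelianization.of) rfl rfl
  rw [Group.isPerfect_def, ← Abelianization.ker_of, eq_top_iff]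
  intro x _
  exact (congrArg (fun k => (k x).2) hlifts).symm

end IsUniversalCentralExtension

theorem Subgroup.comap_center_le_center_of_isPerfect {V U : Type*} [Group V] [Group U]
    [Group.IsPerfect U] {g : V →* U} (hg : Function.Surjective g) (hgc : g.ker ≤ center V) :
    (center U).comap g ≤ center V := by
  set X := (center U).comap g
  have hX : ⁅⁅X, (⊤ : Subgroup V)⁆, (⊤ : Subgroup V)⁆ = ⊥ := by
    refine commutator_top_right_eq_bot_iff_le_center.mpr (le_trans ?_ hgc)
    rw [← MonoidHom.comap_bot, ← map_le_iff_le_comap, map_commutator, ← commutator_center_left ⊤]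
    exact commutator_mono (map_comap_le g _) le_top
  have hcomm : ⁅⁅(⊤ : Subgroup V), ⊤⁆, X⁆ = ⊥ :=
    commutator_commutator_eq_bot_of_rotate (by rwa [commutator_comm ⊤ X]) hX
  have hgen : ⁅(⊤ : Subgroup V), ⊤⁆ ⊔ g.ker = ⊤ := by
    rw [← comap_map_eq, map_commutator, map_top_of_surjective g hg, ← _root_.commutator_def,
      Group.IsPerfect.commutator_eq_top, comap_top]
  rw [← centralizer_univ, ← coe_top, le_centralizer_iff, ← hgen]
  exact sup_le (commutator_eq_bot_iff_le_centralizer.mp hcomm)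
    (hgc.trans (center_le_centralizer _))

theorem MonoidHom.ker_comp_le_center_of_isPerfect {A U V : Type*} [Group A] [Group U] [Group V]
    [Group.IsPerfect U] {u : U →* A} {g : V →* U} (huc : u.ker ≤ center U)
    (hg : Function.Surjective g) (hgc : g.ker ≤ center V) : (u.comp g).ker ≤ center V := by
  rw [← MonoidHom.comap_ker]
  exact (comap_mono huc).trans (comap_center_le_center_of_isPerfect hg hgc)

theorem stmt_17 {A U : Type u} [Group A] [Group U]
    (u : U →* A) (hu : Function.Surjective u)
    (huc : u.ker ≤ Subgroup.center U)
    (huniv : ∀ (B : Type u) [Group B] (f : B →* A),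
      Function.Surjective f → f.ker ≤ Subgroup.center B →
      ∃! h : U →* B, f.comp h = u) :
    ∀ (V : Type u) [Group V] (g : V →* U),
      Function.Surjective g → g.ker ≤ Subgroup.center V →
      ∃ s : U →* V, g.comp s = MonoidHom.id U := by
  intro V _ g hg hgc
  have hUniv : IsUniversalCentralExtension u := ⟨hu, huc, huniv⟩
  have : Group.IsPerfect U := hUniv.isPerfect
  obtain ⟨s, hs, -⟩ :=
    huniv V (u.comp g) (hu.comp hg) (MonoidHom.ker_comp_le_center_of_isPerfect huc hg hgc)
  refine ⟨s, hUniv.hom_ext hu huc ?_ (MonoidHom.comp_id u)⟩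
  rw [← MonoidHom.comp_assoc, hs]
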